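/- arXiv:0910.4053 — 2 statements merged into one kernel-verified Lean document; each statement's English description precedes it below -/
import Mathlib

section
/- The Manhattan-distance heuristic h₂ is admissible for the 8-puzzle: for every configuration p from which the goal configuration g is reachable, the sum over all non-blank tiles of the Manhattan distance between the tile's cell in p and its cell in g is at most the minimal number of moves needed to transform p into g. -/
/-- A cell of the 3×3 board. -/
abbrev Cell : Type := Fin 3 × Fin 3

/-- An 8-puzzle configuration: a bijection from cells to tiles, where tile `0`
is the blank. -/
abbrev Config : Type := Cell ≃ Fin 9

/-- The Manhattan distance between two cells. -/
def mdist (c d : Cell) : ℕ :=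
  ((c.1 : ℤ) - (d.1 : ℤ)).natAbs + ((c.2 : ℤ) - (d.2 : ℤ)).natAbs

/-- A legal move: the contents of the blank cell and of an orthogonally adjacent
cell (a cell at Manhattan distance 1) are swapped. -/
def Move (p q : Config) : Prop :=
  ∃ c : Cell, mdist c (p.symm 0) = 1 ∧ q = (Equiv.swap (p.symm 0) c).trans p

/-- `ReachIn k p q` holds when there is a sequence of `k` legal moves
transforming `p` into `q`. -/
def ReachIn : ℕ → Config → Config → Prop
  | 0, p, q => p = q
  | k + 1, p, q => ∃ r, Move p r ∧ ReachIn k r q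

/-- The misplaced-tiles heuristic `h₁`: the number of non-blank tiles whose cell
in `p` differs from their cell in the goal configuration `g`. -/
def h1 (p g : Config) : ℕ :=
  (Finset.univ.filter (fun t : Fin 9 => t ≠ 0 ∧ p.symm t ≠ g.symm t)).card

/-- The Manhattan-distance heuristic `h₂`: the sum over non-blank tiles of the
Manhattan distance between the tile's cell in `p` and its cell in the goal
configuration `g`. -/
def h2 (p g : Config) : ℕ :=
  ∑ t ∈ Finset.univ.filter (fun t : Fin 9 => t ≠ 0), mdist (p.symm t) (g.symm t)

lemma mdist_tri (a b c : Cell) : mdist a c ≤ mdist a b + mdist b c := by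
  simp only [mdist]; omega

lemma mdist_symm (a b : Cell) : mdist a b = mdist b a := by
  simp only [mdist]; omega

lemma h2_move_step (g p r : Config) (h : Move p r) : h2 p g ≤ h2 r g + 1 := by
  obtain ⟨c, hc, rfl⟩ := h
  set b := p.symm 0 with hb
  have hsymm : ∀ t, ((Equiv.swap b c).trans p).symm t = Equiv.swap b c (p.symm t) := by
    intro t; simp
  have key : ∀ t ∈ Finset.univ.filter (fun t : Fin 9 => t ≠ 0),
      mdist (p.symm t) (g.symm t) ≤
        mdist (((Equiv.swap b c).trans p).symm t) (g.symm t)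
          + (if t = p c then 1 else 0) := by
    intro t ht
    simp only [Finset.mem_filter] at ht
    have hne : p.symm t ≠ b := by
      intro h; apply ht.2; have := congrArg p h
      simpa [hb] using this
    rw [hsymm]
    by_cases hec : p.symm t = c
    · have ht' : t = p c := by rw [← hec]; simp
      rw [hec, Equiv.swap_apply_right, if_pos ht']
      calc mdist c (g.symm t) ≤ mdist c b + mdist b (g.symm t) := mdist_tri _ _ _
        _ = mdist b (g.symm t) + 1 := by rw [hc]; omega
    · rw [Equiv.swap_apply_of_ne_of_ne hne hec, if_neg]
      · omega
      · intro h; apply hec; rw [h]; simp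
  calc h2 p g ≤ ∑ t ∈ Finset.univ.filter (fun t : Fin 9 => t ≠ 0),
        (mdist (((Equiv.swap b c).trans p).symm t) (g.symm t)
          + (if t = p c then 1 else 0)) := Finset.sum_le_sum key
    _ = h2 ((Equiv.swap b c).trans p) g
        + ∑ t ∈ Finset.univ.filter (fun t : Fin 9 => t ≠ 0), (if t = p c then 1 else 0) := by
        rw [Finset.sum_add_distrib]; rfl
    _ ≤ h2 ((Equiv.swap b c).trans p) g + 1 := by
        gcongr
        rw [Finset.sum_ite_eq' (Finset.univ.filter (fun t : Fin 9 => t ≠ 0)) (p c) (fun _ => 1)]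
        split <;> omega

lemma h2_reach (g : Config) : ∀ k p, ReachIn k p g → h2 p g ≤ k := by
  intro k
  induction k with
  | zero => intro p h; cases h; simp [h2, mdist]
  | succ k ih =>
    intro p h
    obtain ⟨r, hm, hr⟩ := h
    have := h2_move_step g p r hm
    have := ih r hr
    omega

/-- Admissibility of the Manhattan-distance heuristic `h₂`: for every
configuration `p` from which the goal configuration `g` is reachable, the sum
over non-blank tiles of the Manhattan distance from their cell in `p` to their
goal cell is at most the minimal number of moves needed to transform `p` into
`g`. -/
theorem h2_admissible (g p : Config) (hreach : ∃ k, ReachIn k p g) :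
    h2 p g ≤ sInf {k : ℕ | ReachIn k p g} := by
  obtain ⟨k, hk⟩ := hreach
  exact le_csInf ⟨k, hk⟩ (fun n hn => h2_reach g n p hn)
end

section
/- Each legal move of the 8-puzzle changes the Manhattan-distance heuristic h₂ by exactly 1: if configuration q is obtained from configuration p by one legal move, then |h₂(p) − h₂(q)| = 1; in particular a single move brings the configuration at most one step closer to the goal, i.e. h₂(p) ≤ h₂(q) + 1. -/
theorem mdist_key : ∀ b c d : Cell, mdist c b = 1 →
    ((mdist c d : ℤ) - (mdist b d : ℤ)).natAbs = 1 := by decide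

/-- Each legal move changes the Manhattan-distance heuristic `h₂` by exactly 1:
if `q` is obtained from `p` by one legal move then `|h₂ p - h₂ q| = 1`; in
particular `h₂ p ≤ h₂ q + 1`. -/
theorem h2_move (g p q : Config) (hmove : Move p q) :
    ((h2 p g : ℤ) - (h2 q g : ℤ)).natAbs = 1 ∧ h2 p g ≤ h2 q g + 1 := by
  obtain ⟨c, hc, hq⟩ := hmove
  set b := p.symm 0 with hb
  set t₀ := p c with ht₀
  have hbc : b ≠ c := by
    intro h; rw [← h] at hc; simp [mdist] at hc
  have ht0 : t₀ ≠ 0 := by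
    intro h
    apply hbc
    have : p.symm t₀ = p.symm 0 := by rw [h]
    simpa [ht₀] using this.symm
  have hqsymm : ∀ t : Fin 9, q.symm t = Equiv.swap b c (p.symm t) := by
    intro t; rw [hq]; simp
  have hqt₀ : q.symm t₀ = b := by
    rw [hqsymm, ht₀]; simp [Equiv.swap_apply_right]
  have hpt₀ : p.symm t₀ = c := by simp [ht₀]
  set S := Finset.univ.filter (fun t : Fin 9 => t ≠ 0) with hS
  have hmem : t₀ ∈ S := by simp [hS, ht0]
  have hrest : ∀ t ∈ S.erase t₀, mdist (q.symm t) (g.symm t) =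
      mdist (p.symm t) (g.symm t) := by
    intro t ht
    have ht1 : t ≠ t₀ := (Finset.mem_erase.mp ht).1
    have ht2 : t ≠ 0 := by
      have := (Finset.mem_erase.mp ht).2; simpa [hS] using this
    rw [hqsymm]
    have h1 : p.symm t ≠ b := by
      intro h; apply ht2; have := congrArg p h; simpa [hb] using this
    have h2 : p.symm t ≠ c := by
      intro h; apply ht1; have := congrArg p h; simpa [ht₀] using this
    rw [Equiv.swap_apply_of_ne_of_ne h1 h2]
  set d := g.symm t₀ with hd
  have hp : h2 p g = mdist c d + ∑ t ∈ S.erase t₀, mdist (p.symm t) (g.symm t) := by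
    rw [h2, ← hS, ← Finset.add_sum_erase S _ hmem, hpt₀, hd]
  have hqsum : h2 q g = mdist b d + ∑ t ∈ S.erase t₀, mdist (p.symm t) (g.symm t) := by
    rw [h2, ← hS, ← Finset.add_sum_erase S _ hmem, hqt₀, hd,
      Finset.sum_congr rfl hrest]
  have key : ((mdist c d : ℤ) - (mdist b d : ℤ)).natAbs = 1 := by
    apply mdist_key
    simpa [mdist, abs_sub_comm] using hc
  have heq : (h2 p g : ℤ) - (h2 q g : ℤ) = (mdist c d : ℤ) - (mdist b d : ℤ) := by
    rw [hp, hqsum]; push_cast; ring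
  constructor
  · rw [heq]; exact key
  · omega
end
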